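/- Let u > 0 satisfy on each leaf Σ_t the parabolic equation 2H²∂u/∂t = 2u²Δ_t u + 4u²H⟨∇u, ∇H^{−1}⟩ + (u − u³)(R_t + 6 − 2HΔ_t H^{−1}), and suppose R_t + 6 − 2HΔ_t H^{−1} > 0 for all t and u(0) > 1. Then u(t) > 1 for all t as long as the solution exists (by the maximum principle, since at u = 1 the zero-order term vanishes and u ≡ 1 is a solution). -/
import Mathlib


open Real

/-- Maximum principle for the Shi–Tam type equation
2H²∂u/∂t = 2u²Δ_t u + 4u²H⟨∇u, ∇H⁻¹⟩ + (u - u³)(R_t + 6 - 2HΔ_t H⁻¹):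
if Q := R_t + 6 - 2HΔ_t H⁻¹ > 0 and u(0) > 1, then u(t) > 1 as long as the
solution exists (since u ≡ 1 is a solution and the zero-order term vanishes
at u = 1). -/
theorem stmt_19 {S : Type*} [TopologicalSpace S] [CompactSpace S] [Nonempty S]
    (T : ℝ) (hT : 0 < T)
    (u H Q Lap Grad : ℝ → S → ℝ)
    (hucont : Continuous fun p : ℝ × S => u p.1 p.2)
    (hHcont : Continuous fun p : ℝ × S => H p.1 p.2)
    (hQcont : Continuous fun p : ℝ × S => Q p.1 p.2)
    (hHpos : ∀ t x, 0 < H t x) (hQpos : ∀ t x, 0 < Q t x)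
    (hmin : ∀ t x, (∀ y, u t x ≤ u t y) → 0 ≤ Lap t x ∧ Grad t x = 0)
    (heq : ∀ t ∈ Set.Ico 0 T, ∀ x, HasDerivAt (fun s => u s x)
      ((2 * H t x ^ 2)⁻¹ * (2 * u t x ^ 2 * Lap t x
        + 4 * u t x ^ 2 * H t x * Grad t x
        + (u t x - u t x ^ 3) * Q t x)) t)
    (hu0 : ∀ x, 1 < u 0 x) :
    ∀ t ∈ Set.Ico 0 T, ∀ x, 1 < u t x := by
  rintro t₁ ⟨ht₁0, ht₁T⟩ x₁
  by_contra hcon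
  push_neg at hcon
  -- The compact slab K = [0, t₁] × S
  have hKcomp : IsCompact (Set.Icc (0:ℝ) t₁ ×ˢ (Set.univ : Set S)) :=
    isCompact_Icc.prod isCompact_univ
  obtain ⟨xb⟩ := ‹Nonempty S›
  have hKne : (Set.Icc (0:ℝ) t₁ ×ˢ (Set.univ : Set S)).Nonempty :=
    ⟨(0, xb), ⟨le_refl 0, ht₁0⟩, trivial⟩
  -- The coefficient function f and a strict bound C - 1 on K
  set f : ℝ × S → ℝ := fun p =>
    (2 * H p.1 p.2 ^ 2)⁻¹ * Q p.1 p.2 * (u p.1 p.2 * (u p.1 p.2 + 1)) with hfdef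
  have hfcont : Continuous f := by
    refine ((Continuous.inv₀ (by fun_prop) ?_).mul hQcont).mul
      (hucont.mul (hucont.add continuous_const))
    intro p; have := hHpos p.1 p.2; positivity
  obtain ⟨pm, hpmK, hpmmax⟩ := hKcomp.exists_isMaxOn hKne hfcont.continuousOn
  set C : ℝ := 1 + max (f pm) 0 with hCdef
  have hCbd : ∀ p ∈ Set.Icc (0:ℝ) t₁ ×ˢ (Set.univ : Set S), f p ≤ C - 1 := by
    intro p hp
    have h1 : f p ≤ f pm := hpmmax hp
    have h2 : f pm ≤ max (f pm) 0 := le_max_left _ _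
    simp only [hCdef]; linarith
  have hCpos : 0 < C := by
    have : (0:ℝ) ≤ max (f pm) 0 := le_max_right _ _
    simp only [hCdef]; linarith
  -- ε : half the initial gap
  obtain ⟨xm, -, hxm⟩ := isCompact_univ.exists_isMinOn Set.univ_nonempty
    ((hucont.comp (Continuous.prodMk_right (0:ℝ))).continuousOn)
  set ε : ℝ := (u 0 xm - 1) / 2 with hεdef
  have hεpos : 0 < ε := by have := hu0 xm; simp only [hεdef]; linarith
  -- the barrier
  set b : ℝ → ℝ := fun t => 1 + ε * Real.exp (-C * t) with hbdef
  have hbcont : Continuous b := by fun_prop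
  -- The bad set A in the slab and its time projection B
  set A : Set (ℝ × S) := (Set.Icc (0:ℝ) t₁ ×ˢ (Set.univ : Set S)) ∩
    {p : ℝ × S | u p.1 p.2 ≤ b p.1} with hAdef
  have hAcomp : IsCompact A :=
    hKcomp.inter_right (isClosed_le hucont (hbcont.comp continuous_fst))
  set B : Set ℝ := Prod.fst '' A with hBdef
  have hBcomp : IsCompact B := hAcomp.image continuous_fst
  have hBne : B.Nonempty := by
    refine ⟨t₁, (t₁, x₁), ⟨⟨⟨ht₁0, le_refl t₁⟩, trivial⟩, ?_⟩, rfl⟩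
    show u t₁ x₁ ≤ 1 + ε * Real.exp (-C * t₁)
    have : (0:ℝ) < ε * Real.exp (-C * t₁) := by positivity
    linarith
  -- the first touching time τ
  obtain ⟨⟨τ, x₀⟩, hpA, hpt⟩ := hBcomp.sInf_mem hBne
  simp only at hpt
  have hτIcc : τ ∈ Set.Icc (0:ℝ) t₁ := hpA.1.1
  have hux₀ : u τ x₀ ≤ b τ := hpA.2
  -- before τ, u > b everywhere
  have hbefore : ∀ t, 0 ≤ t → t < τ → ∀ y, b t < u t y := by
    intro t ht0 htτ y
    by_contra h
    push_neg at h
    have htB : t ∈ B := ⟨(t, y), ⟨⟨⟨ht0, le_trans htτ.le hτIcc.2⟩, trivial⟩, h⟩, rfl⟩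
    have := csInf_le hBcomp.bddBelow htB
    rw [← hpt] at this
    exact absurd this (not_le.mpr htτ)
  -- τ > 0
  have hτpos : 0 < τ := by
    rcases lt_or_eq_of_le hτIcc.1 with h | h
    · exact h
    · exfalso
      have h0 : u 0 x₀ ≤ b 0 := by rw [h]; exact hux₀
      have hb0 : b 0 = 1 + ε := by simp [hbdef]
      have hgap : u 0 xm ≤ u 0 x₀ := by simpa using hxm (Set.mem_univ x₀)
      rw [hb0] at h0
      simp only [hεdef] at h0
      linarith
  -- limits from the left: u τ y ≥ b τ for every y
  have hlim : ∀ y, b τ ≤ u τ y := by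
    intro y
    have hcont : ContinuousAt (fun t => u t y - b t) τ :=
      ((hucont.comp (continuous_id.prodMk continuous_const)).sub hbcont).continuousAt
    have htend : Filter.Tendsto (fun t => u t y - b t) (nhdsWithin τ (Set.Iio τ))
        (nhds (u τ y - b τ)) := hcont.continuousWithinAt.tendsto
    have hev : ∀ᶠ t in nhdsWithin τ (Set.Iio τ), 0 ≤ u t y - b t := by
      filter_upwards [Ioo_mem_nhdsLT_of_mem (Set.mem_Ioc.mpr ⟨hτpos, le_refl τ⟩)] with t ht
      have := hbefore t ht.1.le ht.2 y
      linarith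
    have := ge_of_tendsto htend hev
    linarith
  have huτeq : u τ x₀ = b τ := le_antisymm hux₀ (hlim x₀)
  -- x₀ is a minimum point of u τ
  have hminpt : ∀ y, u τ x₀ ≤ u τ y := fun y => huτeq ▸ hlim y
  obtain ⟨hLap, hGrad⟩ := hmin τ x₀ hminpt
  -- the equation at (τ, x₀)
  have hτT : τ ∈ Set.Ico 0 T := ⟨hτIcc.1, lt_of_le_of_lt hτIcc.2 ht₁T⟩
  have hder : HasDerivAt (fun s => u s x₀)
      ((2 * H τ x₀ ^ 2)⁻¹ * (2 * u τ x₀ ^ 2 * Lap τ x₀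
        + 4 * u τ x₀ ^ 2 * H τ x₀ * Grad τ x₀
        + (u τ x₀ - u τ x₀ ^ 3) * Q τ x₀)) τ := heq τ hτT x₀
  set D : ℝ := (2 * H τ x₀ ^ 2)⁻¹ * (2 * u τ x₀ ^ 2 * Lap τ x₀
        + 4 * u τ x₀ ^ 2 * H τ x₀ * Grad τ x₀
        + (u τ x₀ - u τ x₀ ^ 3) * Q τ x₀) with hDdef
  -- lower bound on D
  have hE : (0:ℝ) < ε * Real.exp (-C * τ) := by positivity
  have huval : u τ x₀ = 1 + ε * Real.exp (-C * τ) := by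
    rw [huτeq]
  have hDlb : D ≥ -(C - 1) * (ε * Real.exp (-C * τ)) := by
    have hfb : f (τ, x₀) ≤ C - 1 := hCbd (τ, x₀) ⟨hτIcc, trivial⟩
    have hHinv : 0 < (2 * H τ x₀ ^ 2)⁻¹ := by
      have := hHpos τ x₀; positivity
    have hu1 : u τ x₀ - 1 = ε * Real.exp (-C * τ) := by rw [huval]; ring
    have hterm1 : 0 ≤ (2 * H τ x₀ ^ 2)⁻¹ * (2 * u τ x₀ ^ 2 * Lap τ x₀) := by
      have h2 : 0 ≤ u τ x₀ ^ 2 := sq_nonneg _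
      positivity
    have hterm3 : (2 * H τ x₀ ^ 2)⁻¹ * ((u τ x₀ - u τ x₀ ^ 3) * Q τ x₀)
        ≥ -(C - 1) * (ε * Real.exp (-C * τ)) := by
      have hfeq : (2 * H τ x₀ ^ 2)⁻¹ * ((u τ x₀ - u τ x₀ ^ 3) * Q τ x₀)
          = -((u τ x₀ - 1) * f (τ, x₀)) := by
        simp only [hfdef]; ring
      rw [hfeq, hu1]
      have := mul_le_mul_of_nonneg_left hfb hE.le
      nlinarith
    have hexpand : D = (2 * H τ x₀ ^ 2)⁻¹ * (2 * u τ x₀ ^ 2 * Lap τ x₀)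
        + (2 * H τ x₀ ^ 2)⁻¹ * (4 * u τ x₀ ^ 2 * H τ x₀ * Grad τ x₀)
        + (2 * H τ x₀ ^ 2)⁻¹ * ((u τ x₀ - u τ x₀ ^ 3) * Q τ x₀) := by
      simp only [hDdef]; ring
    rw [hexpand, hGrad]
    have : (2 * H τ x₀ ^ 2)⁻¹ * (4 * u τ x₀ ^ 2 * H τ x₀ * 0) = 0 := by ring
    rw [this]
    linarith
  -- ψ := u(·, x₀) - b has derivative D' at τ with D' > 0
  have hbder : HasDerivAt b (ε * (Real.exp (-C * τ) * -C)) τ := by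
    have h1 : HasDerivAt (fun t : ℝ => -C * t) (-C) τ := by
      simpa using (hasDerivAt_id τ).const_mul (-C)
    have h2 : HasDerivAt (fun t : ℝ => Real.exp (-C * t))
        (Real.exp (-C * τ) * -C) τ := (Real.hasDerivAt_exp _).comp τ h1
    simpa [hbdef] using ((h2.const_mul ε).const_add 1)
  have hψder : HasDerivAt (fun t => u t x₀ - b t)
      (D - ε * (Real.exp (-C * τ) * -C)) τ := hder.sub hbder
  have hψpos : 0 < D - ε * (Real.exp (-C * τ) * -C) := by nlinarith
  -- but ψ ≥ 0 on [0, τ) and ψ(τ) = 0, so the derivative at τ is ≤ 0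
  have hψnonpos : D - ε * (Real.exp (-C * τ) * -C) ≤ 0 := by
    have hW : HasDerivWithinAt (fun t => u t x₀ - b t)
        (D - ε * (Real.exp (-C * τ) * -C)) (Set.Iio τ) τ :=
      hψder.hasDerivWithinAt
    rw [hasDerivWithinAt_iff_tendsto_slope] at hW
    have hsub : Set.Iio τ \ {τ} = Set.Iio τ := by
      ext t
      simp only [Set.mem_diff, Set.mem_Iio, Set.mem_singleton_iff]
      exact ⟨fun h => h.1, fun h => ⟨h, ne_of_lt h⟩⟩
    rw [hsub] at hW
    refine le_of_tendsto hW ?_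
    filter_upwards [Ioo_mem_nhdsLT_of_mem (Set.mem_Ioc.mpr ⟨hτpos, le_refl τ⟩)] with t ht
    have hψt : 0 ≤ u t x₀ - b t := by
      have := hbefore t ht.1.le ht.2 x₀; linarith
    have hψτ : u τ x₀ - b τ = 0 := by rw [huτeq]; ring
    rw [slope_def_field]
    apply div_nonpos_of_nonneg_of_nonpos
    · linarith
    · linarith [ht.2]
  linarith
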